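/- arXiv:2105.07478 — 3 statements merged into one kernel-verified Lean document; each statement's English description precedes it below -/
import Mathlib

section
/- Let μ be a finite signed Borel measure on [0,∞). Then the map (ω, x) ↦ L(ω,x), where L(ω,x)(t) := ∫₀^∞ x(t − ωl) μ(dl), is jointly continuous from ℝ × C_{2π}(ℝ) to C_{2π}(ℝ), where C_{2π}(ℝ) carries the supremum norm. -/
open MeasureTheory Real Set BoundedContinuousFunction

/-!
Write `L(ω, x) = ∫ x(· − ωl) dμ⁺ − ∫ x(· − ωl) dμ⁻` as a difference of Bochner integrals of
functions `l ↦ x(· − ωl)` with values in the Banach space `ℝ →ᵇ ℝ`. A continuous periodic `x`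
factors through the compact circle, so it is uniformly continuous; hence translation
`(s, x) ↦ x(· + s)` is jointly continuous at `(s₀, x₀)` in the sup norm. The integrands are
bounded by `‖x‖`, so dominated convergence for a finite measure makes the integrals continuous
in `(ω, x)`, and evaluation at `t` commutes with the integral.
-/

theorem Function.Periodic.uniformContinuous_of_continuous {β : Type*} [UniformSpace β]
    {f : ℝ → β} {c : ℝ} (hc : 0 < c) (hp : Function.Periodic f c) (hf : Continuous f) :
    UniformContinuous f := by
  have : Fact (0 < c) := ⟨hc⟩
  have hlift : Continuous (hp.lift : AddCircle c → β) := continuous_quot_lift _ hf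
  have hmk : LipschitzWith 1 ((↑) : ℝ → AddCircle c) :=
    LipschitzWith.of_dist_le_mul fun x y => by
      rw [dist_eq_norm, dist_eq_norm, NNReal.coe_one, one_mul, ← AddCircle.coe_sub]
      exact QuotientAddGroup.norm_mk_le_norm
  exact (CompactSpace.uniformContinuous_of_continuous hlift).comp hmk.uniformContinuous

namespace BoundedContinuousFunction

theorem continuousAt_compContinuous_addRight {G β : Type*} [SeminormedAddCommGroup G]
    [PseudoMetricSpace β] {f₀ : G →ᵇ β} (hf₀ : UniformContinuous f₀) (a₀ : G) :
    ContinuousAt (fun p : G × (G →ᵇ β) => p.2.compContinuous (ContinuousMap.addRight p.1))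
      (a₀, f₀) := by
  rw [Metric.continuousAt_iff]
  intro ε hε
  obtain ⟨δ, hδ, hf₀δ⟩ := Metric.uniformContinuous_iff.1 hf₀ (ε / 2) (half_pos hε)
  refine ⟨min δ (ε / 2), by positivity, fun {p} hp => ?_⟩
  obtain ⟨ha, hf⟩ : dist p.1 a₀ < δ ∧ dist p.2 f₀ < ε / 2 := by
    rw [Prod.dist_eq, max_lt_iff, lt_min_iff, lt_min_iff] at hp
    exact ⟨hp.1.1, hp.2.2⟩
  have hshift_f : dist (p.2.compContinuous (ContinuousMap.addRight p.1))
      (f₀.compContinuous (ContinuousMap.addRight p.1)) ≤ dist p.2 f₀ :=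
    (dist_le dist_nonneg).2 fun t => dist_coe_le_dist (t + p.1)
  have hshift_a : dist (f₀.compContinuous (ContinuousMap.addRight p.1))
      (f₀.compContinuous (ContinuousMap.addRight a₀)) ≤ ε / 2 :=
    (dist_le (half_pos hε).le).2 fun t =>
      (hf₀δ (show dist (t + p.1) (t + a₀) < δ by rwa [dist_add_left])).le
  calc _ ≤ _ := dist_triangle _ (f₀.compContinuous (ContinuousMap.addRight p.1)) _
    _ < ε / 2 + ε / 2 := add_lt_add_of_lt_of_le (hshift_f.trans_lt hf) hshift_a
    _ = ε := add_halves ε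

variable {E : Type*} [NormedAddCommGroup E]

def delay (ω l : ℝ) (x : ℝ →ᵇ E) : ℝ →ᵇ E :=
  x.compContinuous (ContinuousMap.addRight (-(ω * l)))

@[simp]
theorem delay_apply (ω l : ℝ) (x : ℝ →ᵇ E) (t : ℝ) : delay ω l x t = x (t - ω * l) := by
  simp [delay, sub_eq_add_neg]

theorem continuousAt_delay {x₀ : ℝ →ᵇ E} (hx₀ : UniformContinuous x₀) (ω₀ l₀ : ℝ) :
    ContinuousAt (fun p : ℝ × ℝ × (ℝ →ᵇ E) => delay p.1 p.2.1 p.2.2) (ω₀, l₀, x₀) :=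
  (continuousAt_compContinuous_addRight hx₀ (-(ω₀ * l₀))).comp (x := (ω₀, l₀, x₀))
    (f := fun p : ℝ × ℝ × (ℝ →ᵇ E) => (-(p.1 * p.2.1), p.2.2)) (by fun_prop)

theorem continuous_delay {x : ℝ →ᵇ E} (hx : UniformContinuous x) (ω : ℝ) :
    Continuous fun l => delay ω l x :=
  continuous_iff_continuousAt.2 fun l =>
    (continuousAt_delay hx ω l).comp (x := l) (f := fun l => (ω, l, x)) (by fun_prop)

variable [NormedSpace ℝ E] (ν : Measure ℝ) [IsFiniteMeasure ν]

theorem continuous_integral_delay :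
    Continuous fun p : ℝ × {x : ℝ →ᵇ E // UniformContinuous x} =>
      ∫ l, delay p.1 l (p.2 : ℝ →ᵇ E) ∂ν := by
  refine continuous_iff_continuousAt.2 fun ⟨ω₀, x₀, hx₀⟩ => ?_
  refine continuousAt_of_dominated (bound := fun _ => ‖x₀‖ + 1) ?_ ?_ (integrable_const _) ?_
  · exact Filter.Eventually.of_forall fun ⟨ω, _, hx⟩ =>
      (continuous_delay hx ω).aestronglyMeasurable
  · have hnear : ∀ᶠ p : ℝ × {x : ℝ →ᵇ E // UniformContinuous x} in nhds (ω₀, ⟨x₀, hx₀⟩),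
        ‖(p.2 : ℝ →ᵇ E)‖ < ‖x₀‖ + 1 :=
      (continuous_norm.comp (continuous_subtype_val.comp continuous_snd)).continuousAt
        |>.eventually_lt continuousAt_const (lt_add_one _)
    filter_upwards [hnear] with p hp
    exact Filter.Eventually.of_forall fun l => (norm_compContinuous_le _ _).trans hp.le
  · exact Filter.Eventually.of_forall fun l =>
      (continuousAt_delay hx₀ ω₀ l).comp (x := (ω₀, ⟨x₀, hx₀⟩))
        (f := fun p : ℝ × {x : ℝ →ᵇ E // UniformContinuous x} => (p.1, l, (p.2 : ℝ →ᵇ E)))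
        (by fun_prop)

theorem integral_delay_apply [CompleteSpace E] {x : ℝ →ᵇ E} (hx : UniformContinuous x)
    (ω t : ℝ) : (∫ l, delay ω l x ∂ν) t = ∫ l, x (t - ω * l) ∂ν := by
  have hint : Integrable (fun l => delay ω l x) ν :=
    Integrable.of_bound (continuous_delay hx ω).aestronglyMeasurable ‖x‖
      (Filter.Eventually.of_forall fun l => norm_compContinuous_le _ _)
  simpa using ((evalCLM ℝ t).integral_comp_comm hint).symm

end BoundedContinuousFunction

theorem stmt_3_general
    (μp μn : Measure ℝ) [IsFiniteMeasure μp] [IsFiniteMeasure μn]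
    (L : ℝ → {x : ℝ →ᵇ ℝ // Function.Periodic (⇑x) (2 * π)} → (ℝ →ᵇ ℝ))
    (hL : ∀ ω x t, L ω x t =
      (∫ l in Ici (0:ℝ), (x : ℝ →ᵇ ℝ) (t - ω * l) ∂μp)
        - (∫ l in Ici (0:ℝ), (x : ℝ →ᵇ ℝ) (t - ω * l) ∂μn)) :
    Continuous (fun p : ℝ × {x : ℝ →ᵇ ℝ // Function.Periodic (⇑x) (2 * π)} =>
      L p.1 p.2) := by
  have huc (x : {x : ℝ →ᵇ ℝ // Function.Periodic (⇑x) (2 * π)}) :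
      UniformContinuous (x : ℝ →ᵇ ℝ) :=
    x.2.uniformContinuous_of_continuous two_pi_pos (x : ℝ →ᵇ ℝ).continuous
  have hL_eq : (fun p : ℝ × {x : ℝ →ᵇ ℝ // Function.Periodic (⇑x) (2 * π)} => L p.1 p.2) =
      fun p => (∫ l in Ici 0, delay p.1 l (p.2 : ℝ →ᵇ ℝ) ∂μp)
        - ∫ l in Ici 0, delay p.1 l (p.2 : ℝ →ᵇ ℝ) ∂μn := by
    ext p t
    rw [hL, BoundedContinuousFunction.sub_apply, integral_delay_apply _ (huc p.2),
      integral_delay_apply _ (huc p.2)]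
  have hincl : Continuous fun p : ℝ × {x : ℝ →ᵇ ℝ // Function.Periodic (⇑x) (2 * π)} =>
      ((p.1, ⟨p.2, huc p.2⟩) : ℝ × {x : ℝ →ᵇ ℝ // UniformContinuous x}) := by
    fun_prop
  rw [hL_eq]
  exact ((continuous_integral_delay _).comp hincl).sub
    ((continuous_integral_delay _).comp hincl)

/-- For a finite signed Borel measure `μ = μp − μn` on `[0,∞)`, the map
`(ω, x) ↦ L(ω,x)`, `L(ω,x)(t) = ∫₀^∞ x(t−ωl) μ(dl)`, is jointly continuous from
`ℝ × C_{2π}(ℝ)` to `C_{2π}(ℝ)` (continuous `2π`-periodic functions with sup norm,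
realized as a subspace of the bounded continuous functions). -/
theorem stmt_3
    (μp μn : Measure ℝ) [IsFiniteMeasure μp] [IsFiniteMeasure μn]
    (hμp : μp (Iio 0) = 0) (hμn : μn (Iio 0) = 0)
    (L : ℝ → {x : ℝ →ᵇ ℝ // Function.Periodic (⇑x) (2 * π)} → (ℝ →ᵇ ℝ))
    (hL : ∀ ω x t, L ω x t =
      (∫ l in Ici (0:ℝ), (x : ℝ →ᵇ ℝ) (t - ω * l) ∂μp)
        - (∫ l in Ici (0:ℝ), (x : ℝ →ᵇ ℝ) (t - ω * l) ∂μn))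
    (hLper : ∀ ω x, Function.Periodic (⇑(L ω x)) (2 * π)) :
    Continuous (fun p : ℝ × {x : ℝ →ᵇ ℝ // Function.Periodic (⇑x) (2 * π)} =>
      L p.1 p.2) :=
  stmt_3_general μp μn L hL
end

section
/- Let χ ∈ L¹((0,∞),ℝ), c ∈ ℝ, and suppose that for every integer n with n ≠ ±1 one has 1 − c·∫₀^∞ χ(l) e^{−inl} dl ≠ 0. Define K on X₂ by (Kφ)(t) = c ∫₀^∞ χ(l) φ(t − l) dl. Then the kernel of I − K on X₂ is trivial: if g ∈ X₂ satisfies g(t) = c ∫₀^∞ χ(l) g(t − l) dl for all t ∈ ℝ, then g = 0. -/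
/-!
Passing to the 2π-periodic Fourier coefficients `ĝ(n) = ∫₀^{2π} g(t) e^{-int} dt`, the convolution
`t ↦ ∫₀^∞ χ(l) g(t - l) dl` has coefficients `χ̂(n) ĝ(n)` (Fubini plus translation invariance of
the integral of a periodic function), so `g = c (χ * g)` gives `(1 - c χ̂(n)) ĝ(n) = 0`, hence
`ĝ(n) = 0` for `n ≠ ±1`. Membership in `X₂` says `ĝ(-1) = 0`, and `ĝ(1)` is its conjugate as `g`
is real. A continuous periodic function all of whose Fourier coefficients vanish is zero, because
the characters form a Hilbert basis of `L²` of the circle.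
-/

open MeasureTheory Real Set Complex

open AddCircle in
theorem ContinuousMap.eq_zero_of_fourierCoeff_eq_zero {T : ℝ} [Fact (0 < T)]
    (F : C(AddCircle T, ℂ)) (h : ∀ n : ℤ, fourierCoeff F n = 0) : F = 0 := by
  have hLp : ContinuousMap.toLp (E := ℂ) 2 haarAddCircle ℂ F = 0 := by
    refine fourierBasis.repr.injective ?_
    ext n
    simpa [fourierBasis_repr] using (fourierCoeff_toLp F n).trans (h n)
  exact ContinuousMap.toLp_injective (𝕜 := ℂ) (p := 2) haarAddCircle (by simpa using hLp)

/-- `∫₀^{2π} f(t) e^{-int} dt`: unlike Mathlib's `fourierCoeff`, there is no factor `1 / (2π)`. -/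
noncomputable def fourierCoeffTwoPi (f : ℝ → ℂ) (n : ℤ) : ℂ :=
  ∫ t in (0 : ℝ)..2 * π, f t * exp (-I * n * t)

theorem fourierCoeffTwoPi_const_mul (c : ℂ) (f : ℝ → ℂ) (n : ℤ) :
    fourierCoeffTwoPi (fun t => c * f t) n = c * fourierCoeffTwoPi f n := by
  simp only [fourierCoeffTwoPi, mul_assoc, intervalIntegral.integral_const_mul]

theorem fourierCoeffTwoPi_ofReal_neg (g : ℝ → ℝ) (n : ℤ) :
    fourierCoeffTwoPi (fun t => (g t : ℂ)) (-n) =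
      starRingEnd ℂ (fourierCoeffTwoPi (fun t => (g t : ℂ)) n) := by
  simp only [fourierCoeffTwoPi, intervalIntegral.integral_of_le two_pi_pos.le, ← integral_conj,
    map_mul, conj_ofReal, ← exp_conj]
  congr! 3
  simp

namespace Function.Periodic

variable {f : ℝ → ℂ}

theorem eq_zero_of_fourierCoeffTwoPi_eq_zero (hf : Periodic f (2 * π)) (hc : Continuous f)
    (h : ∀ n : ℤ, fourierCoeffTwoPi f n = 0) : f = 0 := by
  have : Fact (0 < 2 * π) := ⟨two_pi_pos⟩
  let F : C(AddCircle (2 * π), ℂ) := ⟨hf.lift, continuous_coinduced_dom.mpr hc⟩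
  have hcoeff (n : ℤ) : fourierCoeff F n = (2 * π : ℂ)⁻¹ * fourierCoeffTwoPi f n := by
    rw [fourierCoeff_eq_intervalIntegral (⇑F) n 0, zero_add, fourierCoeffTwoPi, Complex.real_smul]
    push_cast
    congr 1
    · rw [one_div]
    · refine intervalIntegral.integral_congr fun t _ => ?_
      simp only [F, ContinuousMap.coe_mk, lift_coe, fourier_coe_apply, smul_eq_mul, mul_comm (f t)]
      congr 2
      field_simp
      push_cast
      ring
  have hF : F = 0 := F.eq_zero_of_fourierCoeff_eq_zero fun n => by rw [hcoeff, h, mul_zero]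
  funext t
  simpa [F] using congr($hF (t : AddCircle (2 * π)))

theorem fourierCoeffTwoPi_comp_sub (hf : Periodic f (2 * π)) (l : ℝ) (n : ℤ) :
    fourierCoeffTwoPi (fun t => f (t - l)) n = exp (-I * n * l) * fourierCoeffTwoPi f n := by
  have hper : Periodic (fun s => f s * exp (-I * n * s)) (2 * π) := fun s => by
    have : -I * n * ↑(s + 2 * π) = -I * n * s + (-n : ℤ) * (2 * π * I) := by push_cast; ring
    beta_reduce
    rw [hf s, this, Complex.exp_add, exp_int_mul_two_pi_mul_I, mul_one]
  have hshift : (fun t : ℝ => f (t - l) * exp (-I * n * t)) =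
      fun t => exp (-I * n * l) * (f (t - l) * exp (-I * n * ↑(t - l))) := by
    funext t
    rw [mul_left_comm, ← Complex.exp_add]
    push_cast
    ring_nf
  rw [fourierCoeffTwoPi, hshift, intervalIntegral.integral_const_mul,
    intervalIntegral.integral_comp_sub_right (fun s => f s * exp (-I * n * s)),
    zero_sub, sub_eq_neg_add, hper.intervalIntegral_add_eq (-l) 0, zero_add, fourierCoeffTwoPi]

theorem fourierCoeffTwoPi_integral_mul_comp_sub {χ : ℝ → ℂ} {s : Set ℝ} (hχ : IntegrableOn χ s)
    (hf : Periodic f (2 * π)) (hc : Continuous f) (n : ℤ) :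
    fourierCoeffTwoPi (fun t => ∫ l in s, χ l * f (t - l)) n =
      (∫ l in s, χ l * exp (-I * n * l)) * fourierCoeffTwoPi f n := by
  set e : ℝ → ℂ := fun t => exp (-I * n * t)
  obtain ⟨M, hM⟩ := (hf.isBounded_of_continuous two_pi_pos.ne' hc).exists_norm_le
  have hint : Integrable (Function.uncurry fun t l => f (t - l) * e t * χ l)
      ((volume.restrict (Ioc 0 (2 * π))).prod (volume.restrict s)) := by
    refine Integrable.bdd_mul (c := M) ?_ (by fun_prop) (ae_of_all _ fun p => ?_)
    · simpa using (integrableOn_const (C := (1 : ℂ)) measure_Ioc_lt_top.ne).mul_prod hχ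
    · simpa [e, norm_exp] using hM _ (mem_range_self (p.1 - p.2))
  calc fourierCoeffTwoPi (fun t => ∫ l in s, χ l * f (t - l)) n
      = ∫ t in Ioc 0 (2 * π), ∫ l in s, f (t - l) * e t * χ l := by
        rw [fourierCoeffTwoPi, intervalIntegral.integral_of_le two_pi_pos.le]
        congr 1 with t
        rw [← integral_mul_const]
        simp only [mul_comm (χ _), mul_right_comm _ (e t)]
        rfl
    _ = ∫ l in s, ∫ t in Ioc 0 (2 * π), f (t - l) * e t * χ l := integral_integral_swap hint
    _ = ∫ l in s, χ l * e l * fourierCoeffTwoPi f n := by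
        congr 1 with l
        rw [integral_mul_const, ← intervalIntegral.integral_of_le two_pi_pos.le, mul_comm,
          mul_assoc, ← hf.fourierCoeffTwoPi_comp_sub]
        rfl
    _ = (∫ l in s, χ l * e l) * fourierCoeffTwoPi f n := integral_mul_const _ _

end Function.Periodic

/-- If `1 − c·χ̂(n) ≠ 0` for every integer `n ≠ ±1`, then the kernel of
`I − K` on `X₂` is trivial: any `g ∈ X₂` with `g(t) = c ∫₀^∞ χ(l) g(t−l) dl` for all
`t` vanishes identically. -/
theorem stmt_6 (χ : ℝ → ℝ) (hχ : IntegrableOn χ (Ioi 0)) (c : ℝ)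
    (hchar : ∀ n : ℤ, n ≠ 1 → n ≠ -1 →
      (1 : ℂ) - (c : ℂ) * ∫ l in Ioi (0:ℝ), (χ l : ℂ) * Complex.exp (-Complex.I * n * l) ≠ 0)
    (g : ℝ → ℝ) (hgc : Continuous g) (hgper : Function.Periodic g (2 * π))
    (hgX2 : (∫ t in (0:ℝ)..(2 * π), (g t : ℂ) * Complex.exp (Complex.I * t)) = 0)
    (heq : ∀ t : ℝ, g t = c * ∫ l in Ioi (0:ℝ), χ l * g (t - l)) :
    g = 0 := by
  set gC : ℝ → ℂ := fun t => (g t : ℂ)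
  have hper : Function.Periodic gC (2 * π) := fun t => by simp [gC, hgper t]
  have hcont : Continuous gC := by fun_prop
  have hfix : gC = fun t => (c : ℂ) * ∫ l in Ioi 0, (χ l : ℂ) * gC (t - l) := by
    funext t
    simp only [gC, heq t, ofReal_mul, ← integral_complex_ofReal]
  have hneg : fourierCoeffTwoPi gC (-1) = 0 := by simpa [fourierCoeffTwoPi] using hgX2
  have hcoeff (n : ℤ) : fourierCoeffTwoPi gC n = 0 := by
    rcases eq_or_ne n 1 with rfl | h1
    · rw [← neg_neg (1 : ℤ), fourierCoeffTwoPi_ofReal_neg, hneg, map_zero]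
    rcases eq_or_ne n (-1) with rfl | hm1
    · exact hneg
    have hconv : fourierCoeffTwoPi gC n = c * ((∫ l in Ioi 0, (χ l : ℂ) * exp (-I * n * l)) *
        fourierCoeffTwoPi gC n) := by
      conv_lhs => rw [hfix]
      rw [fourierCoeffTwoPi_const_mul,
        hper.fourierCoeffTwoPi_integral_mul_comp_sub (χ := fun l => (χ l : ℂ)) hχ.ofReal hcont]
    exact (mul_eq_zero.mp (by linear_combination hconv)).resolve_left (hchar n h1 hm1)
  funext t
  simpa [gC] using congrFun (hper.eq_zero_of_fourierCoeffTwoPi_eq_zero hcont hcoeff) t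
end

section
/- Let χ ∈ L¹((0,∞),ℝ) with l ↦ lχ(l) ∈ L¹, let c ∈ ℝ and ω₀ > 0, and suppose 1 = c·χ̂(ω₀) where χ̂(θ) := ∫₀^∞ χ(l) e^{−iθl} dl, and that the smooth branch λ(ν) of roots of Δ(ν,λ) := 1 − c(ν) χ̂_λ (with c(ν) := ∂_w f(ν, w̄_ν), χ̂_λ := ∫₀^∞ χ(l) e^{−λl} dl) satisfies Δ(ν, λ(ν)) = 0 and λ(ν₀) = iω₀. If ∂_λ Δ(ν₀, iω₀) ≠ 0, then dλ/dν(ν₀) = [∂_ν c(ν₀) · ∫₀^∞ χ(l) e^{−iω₀ l} dl] / [c(ν₀) · ∫₀^∞ l χ(l) e^{−iω₀ l} dl], and Re(dλ/dν(ν₀)) ≠ 0 is equivalent to ∂_ν c(ν₀) · Im(χ̂'(ω₀)) ≠ 0, where χ̂'(θ) = −i ∫₀^∞ l χ(l) e^{−iθl} dl. -/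
/-!
Differentiating the identity `c(ν) · χ̂(λ(ν)) = 1` at `ν₀` gives
`c' χ̂(iω₀) - c(ν₀) λ' L = 0` with `L = ∫ l χ(l) e^{-iω₀ l} dl`, the derivative of the Laplace
transform being computed under the integral sign thanks to the exponential moment of `χ`.
Under the normalization `c(ν₀) χ̂(iω₀) = 1` this reads `λ' = c' / (c(ν₀)² L)`, whose real part
is a positive multiple of `c' · Re L = -c' · Im(-i L)`.
-/

open MeasureTheory Set Complex

lemma norm_exp_neg_mul_ofReal (z : ℂ) (l : ℝ) : ‖exp (-z * l)‖ = Real.exp (-(z.re * l)) := by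
  simp [Complex.norm_exp]

lemma le_exp_mul_div {δ : ℝ} (hδ : 0 < δ) (l : ℝ) : l ≤ Real.exp (δ * l) / δ := by
  rw [le_div_iff₀ hδ, mul_comm]
  linarith [Real.add_one_le_exp (δ * l)]

lemma hasDerivAt_laplace {f : ℝ → ℂ} {ε : ℝ}
    (hf : AEStronglyMeasurable f (volume.restrict (Ioi 0)))
    (hdom : IntegrableOn (fun l => Real.exp (ε * l) * ‖f l‖) (Ioi 0))
    {z₀ : ℂ} (hz₀ : -ε < z₀.re) :
    HasDerivAt (fun z : ℂ => ∫ l in Ioi (0:ℝ), f l * exp (-z * l))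
      (-∫ l in Ioi (0:ℝ), l * f l * exp (-z₀ * l)) z₀ := by
  set δ := (z₀.re + ε) / 2 with hδ_def
  have hδ : 0 < δ := by linarith
  have hmeas (z : ℂ) : AEStronglyMeasurable (fun l : ℝ => f l * exp (-z * l))
      (volume.restrict (Ioi 0)) := hf.mul (by fun_prop)
  have hre {z : ℂ} (hz : z ∈ Metric.ball z₀ δ) : -z.re ≤ ε - δ := by
    have := (abs_re_le_norm (z - z₀)).trans (mem_ball_iff_norm.mp hz).le
    rw [sub_re] at this
    linarith [abs_le.mp this]
  have hF_int : Integrable (fun l : ℝ => f l * exp (-z₀ * l)) (volume.restrict (Ioi 0)) := by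
    refine hdom.mono' (hmeas z₀) ?_
    rw [ae_restrict_iff' measurableSet_Ioi]
    filter_upwards with l (hl : 0 < l)
    rw [norm_mul, norm_exp_neg_mul_ofReal, mul_comm]
    gcongr
    nlinarith
  -- `l ≤ exp (δ l) / δ` trades the factor `l` of the derivative for the exponential margin `δ`.
  have h_bound : ∀ᵐ l ∂(volume.restrict (Ioi (0:ℝ))), ∀ z ∈ Metric.ball z₀ δ,
      ‖f l * (exp (-z * l) * -l)‖ ≤ δ⁻¹ * (Real.exp (ε * l) * ‖f l‖) := by
    rw [ae_restrict_iff' measurableSet_Ioi]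
    filter_upwards with l (hl : 0 < l) z hz
    have hexp : Real.exp (-(z.re * l)) ≤ Real.exp ((ε - δ) * l) := by
      gcongr; nlinarith [hre hz]
    calc ‖f l * (exp (-z * l) * -l)‖ = ‖f l‖ * (Real.exp (-(z.re * l)) * l) := by
          rw [norm_mul, norm_mul, norm_exp_neg_mul_ofReal, norm_neg, norm_real,
            Real.norm_of_nonneg hl.le]
      _ ≤ ‖f l‖ * (Real.exp ((ε - δ) * l) * (Real.exp (δ * l) / δ)) := by
          gcongr; exact le_exp_mul_div hδ l
      _ = δ⁻¹ * (Real.exp (ε * l) * ‖f l‖) := by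
          rw [← sub_add_cancel ε δ, add_mul, Real.exp_add]; ring_nf
  have h_diff : ∀ᵐ l ∂(volume.restrict (Ioi (0:ℝ))), ∀ z ∈ Metric.ball z₀ δ,
      HasDerivAt (fun z : ℂ => f l * exp (-z * l)) (f l * (exp (-z * l) * -l)) z := by
    filter_upwards with l z _
    simpa using (((hasDerivAt_id z).neg.mul_const (l : ℂ)).cexp).const_mul (f l)
  have key := (hasDerivAt_integral_of_dominated_loc_of_deriv_le (Metric.ball_mem_nhds z₀ hδ)
    (.of_forall hmeas) hF_int (hf.mul
    (by fun_prop : Continuous fun l : ℝ => exp (-z₀ * l) * -l).aestronglyMeasurable) h_bound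
    (hdom.const_mul _) h_diff).2
  have hintegrand : (fun l : ℝ => f l * (exp (-z₀ * l) * -l))
      = fun l : ℝ => -(l * f l * exp (-z₀ * l)) := by
    ext l; ring
  rwa [hintegrand, integral_neg] at key

lemma implicit_deriv_of_ofReal_mul_comp_eq_one {c : ℝ → ℝ} {G : ℂ → ℂ} {lam : ℝ → ℂ}
    {ν₀ c' : ℝ} {lam' G' : ℂ} (hc : HasDerivAt c c' ν₀) (hlam : HasDerivAt lam lam' ν₀)
    (hG : HasDerivAt G G' (lam ν₀)) (hroot : ∀ ν, (c ν : ℂ) * G (lam ν) = 1) :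
    c' * G (lam ν₀) + c ν₀ * (G' * lam') = 0 := by
  have hprod := hc.ofReal_comp.mul (hG.comp ν₀ hlam)
  rw [show (fun ν => (c ν : ℂ)) * G ∘ lam = fun _ => 1 from funext hroot] at hprod
  exact hprod.unique (hasDerivAt_const ν₀ (1 : ℂ))

lemma re_ofReal_div_ofReal_mul (a b : ℝ) (L : ℂ) :
    ((a : ℂ) / (b * L)).re = a * L.re / (b * normSq L) := by
  rcases eq_or_ne b 0 with rfl | hb
  · simp
  rw [div_re, re_ofReal_mul, im_ofReal_mul, map_mul, normSq_ofReal]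
  simp only [ofReal_re, ofReal_im]
  field_simp
  ring

theorem stmt_12_general (χ : ℝ → ℝ)
    (hχ : IntegrableOn χ (Ioi 0))
    (hdom : ∃ ε > (0:ℝ), IntegrableOn (fun l => Real.exp (ε * l) * |χ l|) (Ioi 0))
    (c : ℝ → ℝ) (lam : ℝ → ℂ) (ν₀ ω₀ : ℝ)
    (c' : ℝ) (lam' : ℂ)
    (hc : HasDerivAt c c' ν₀) (hlam : HasDerivAt lam lam' ν₀)
    (hroot : ∀ ν : ℝ,
      (1 : ℂ) - (c ν : ℂ) * ∫ l in Ioi (0:ℝ), (χ l : ℂ) * Complex.exp (-(lam ν) * l) = 0)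
    (hlam0 : lam ν₀ = Complex.I * ω₀)
    (hnorm : (c ν₀ : ℂ)
        * (∫ l in Ioi (0:ℝ), (χ l : ℂ) * Complex.exp (-(Complex.I * ω₀) * l)) = 1)
    (hsimple : (c ν₀ : ℂ)
        * (∫ l in Ioi (0:ℝ), (l : ℂ) * (χ l : ℂ) * Complex.exp (-(Complex.I * ω₀) * l)) ≠ 0) :
    lam' = ((c' : ℂ) * ∫ l in Ioi (0:ℝ), (χ l : ℂ) * Complex.exp (-(Complex.I * ω₀) * l))
        / ((c ν₀ : ℂ) * ∫ l in Ioi (0:ℝ), (l : ℂ) * (χ l : ℂ) * Complex.exp (-(Complex.I * ω₀) * l))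
      ∧ (lam'.re ≠ 0 ↔
          c' * (-Complex.I
              * ∫ l in Ioi (0:ℝ), (l : ℂ) * (χ l : ℂ) * Complex.exp (-(Complex.I * ω₀) * l)).im ≠ 0) := by
  obtain ⟨ε, hε, hεχ⟩ := hdom
  set χhat := ∫ l in Ioi (0:ℝ), (χ l : ℂ) * exp (-(I * ω₀) * l)
  set L := ∫ l in Ioi (0:ℝ), (l : ℂ) * (χ l : ℂ) * exp (-(I * ω₀) * l)
  have hc0 : (c ν₀ : ℂ) ≠ 0 := left_ne_zero_of_mul hsimple
  have hL : L ≠ 0 := right_ne_zero_of_mul hsimple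
  have hderiv := hasDerivAt_laplace (f := fun l => (χ l : ℂ)) (z₀ := I * ω₀)
    (continuous_ofReal.comp_aestronglyMeasurable hχ.aestronglyMeasurable)
    (by simpa only [norm_real, Real.norm_eq_abs] using hεχ) (by simpa using hε)
  have himplicit := implicit_deriv_of_ofReal_mul_comp_eq_one hc hlam (hlam0 ▸ hderiv)
    fun ν => (sub_eq_zero.mp (hroot ν)).symm
  rw [hlam0] at himplicit
  have hformula : lam' = c' * χhat / (c ν₀ * L) := by
    field_simp
    linear_combination -himplicit
  refine ⟨hformula, ?_⟩
  have hnormalized : lam' = (c' : ℂ) / ((c ν₀ ^ 2 : ℝ) * L) := by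
    rw [hformula, div_eq_div_iff hsimple (by simp [hc0, hL])]
    push_cast
    linear_combination c' * c ν₀ * L * hnorm
  have hc0' : c ν₀ ≠ 0 := by exact_mod_cast hc0
  rw [hnormalized, re_ofReal_div_ofReal_mul, show (-I * L).im = -L.re by simp]
  simp [hc0', hL]

/-- derivative of the root branch of the characteristic function
`Δ(ν,λ) = 1 − c(ν) ∫₀^∞ χ(l) e^{−λl} dl` along `Δ(ν, λ(ν)) = 0`, `λ(ν₀) = iω₀`, and
the equivalence `Re λ'(ν₀) ≠ 0 ↔ c'(ν₀)·Im χ̂'(ω₀) ≠ 0` under the normalization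
`c(ν₀) χ̂(ω₀) = 1`, where `χ̂'(θ) = −i ∫₀^∞ l χ(l) e^{−iθl} dl`. -/
theorem stmt_12 (χ : ℝ → ℝ)
    (hχ : IntegrableOn χ (Ioi 0))
    (hlχ : IntegrableOn (fun l => l * χ l) (Ioi 0))
    (hdom : ∃ ε > (0:ℝ), IntegrableOn (fun l => Real.exp (ε * l) * |χ l|) (Ioi 0))
    (c : ℝ → ℝ) (lam : ℝ → ℂ) (ν₀ ω₀ : ℝ) (hω₀ : 0 < ω₀)
    (c' : ℝ) (lam' : ℂ)
    (hc : HasDerivAt c c' ν₀) (hlam : HasDerivAt lam lam' ν₀)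
    (hroot : ∀ ν : ℝ,
      (1 : ℂ) - (c ν : ℂ) * ∫ l in Ioi (0:ℝ), (χ l : ℂ) * Complex.exp (-(lam ν) * l) = 0)
    (hlam0 : lam ν₀ = Complex.I * ω₀)
    (hnorm : (c ν₀ : ℂ)
        * (∫ l in Ioi (0:ℝ), (χ l : ℂ) * Complex.exp (-(Complex.I * ω₀) * l)) = 1)
    (hsimple : (c ν₀ : ℂ)
        * (∫ l in Ioi (0:ℝ), (l : ℂ) * (χ l : ℂ) * Complex.exp (-(Complex.I * ω₀) * l)) ≠ 0) :
    lam' = ((c' : ℂ) * ∫ l in Ioi (0:ℝ), (χ l : ℂ) * Complex.exp (-(Complex.I * ω₀) * l))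
        / ((c ν₀ : ℂ) * ∫ l in Ioi (0:ℝ), (l : ℂ) * (χ l : ℂ) * Complex.exp (-(Complex.I * ω₀) * l))
      ∧ (lam'.re ≠ 0 ↔
          c' * (-Complex.I
              * ∫ l in Ioi (0:ℝ), (l : ℂ) * (χ l : ℂ) * Complex.exp (-(Complex.I * ω₀) * l)).im ≠ 0) :=
  stmt_12_general χ hχ hdom c lam ν₀ ω₀ c' lam' hc hlam hroot hlam0 hnorm hsimple
end
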